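/- Suppose Assumptions A, B and C-2 hold and let (x^r, y^r) be generated by HiBSA (concave case). Define the potential function P^{r+1} := ℓ(x^{r+1}, y^{r+1}) − (γ^r/2)‖y^{r+1}‖² − (2/ρ)(γ^{r−1}/γ^r − 1)‖y^{r+1}‖² + (1/(2ρ) + 2/(ρ²γ^r) + (2/ρ²)(1/γ^{r+1} − 1/γ^r))‖y^{r+1} − y^r‖². Suppose that for all r: β^r > ρL_y² + 4L_y²/(ρ(γ^r)²) − 2μ with μ := min_i μ_i, β^r > L_{x_i} for all i, the sequence γ^r > 0 is nonincreasing, and 1/γ^{r+1} − 1/γ^r ≤ ρ/5. Then for every r, P^{r+1} ≤ P^r − (β^r/2 + μ − (ρL_y²/2 + 2L_y²/(ρ(γ^r)²)))‖x^{r+1} − x^r‖² − (1/(10ρ))‖y^{r+1} − y^r‖² + ((γ^{r−1} − γ^r)/2)‖y^{r+1}‖² + (2/ρ)(γ^{r−2}/γ^{r−1} − γ^{r−1}/γ^r)‖y^r‖². -/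

import Mathlib

/-!
Each block update of the `x`-sweep is a proximal step on a strongly convex surrogate whose gradient
agrees with `∇_{x_i} f` at the current point; together with the block descent lemma for `f` this
decreases `f(·, y^r) + Σ h_i` by `(β^r/2 + μ)‖x^{r+1} − x^r‖²`. The `y`-update maximizes a
`(γ^r + 1/ρ)`-strongly concave function, so comparing it with the competitors `y^r` (at step `r`)
and `y^{r+1}` (at step `r − 1`) gives two quadratic growth inequalities. Combined with the bound on
`f(x^{r+1}, ·) − f(x^r, ·)` coming from the Lipschitz continuity of `∇_y f`, they yield an estimate
of `ℓ^{r+1} − ℓ^r` and a recursion for `‖y^{r+1} − y^r‖²`; adding `4/(ργ^r)` times the recursion to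
the estimate and applying Young's inequality gives the decrease of the potential.
-/

open scoped RealInnerProductSpace

/-- The `i`-th block space `ℝ^N`. -/
abbrev Blk (N : ℕ) : Type := EuclideanSpace ℝ (Fin N)

/-- The full `x`-space `ℝ^{NK}`, with the Euclidean (ℓ²) product norm. -/
abbrev XVec (N K : ℕ) : Type := PiLp 2 (fun _ : Fin K => Blk N)

/-- The `y`-space `ℝ^M`. -/
abbrev YVec (M : ℕ) : Type := EuclideanSpace ℝ (Fin M)

/-- `hibsaW xs r i = w_i^{r+1} = (x_1^{r+1},…,x_{i−1}^{r+1}, x_i^r,…,x_K^r)`. -/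
noncomputable def hibsaW {N K : ℕ} (xs : ℕ → XVec N K) (r : ℕ) (i : Fin K) : XVec N K :=
  WithLp.toLp 2 (fun j : Fin K => if (j : ℕ) < (i : ℕ) then xs (r + 1) j else xs r j)

/-- Replace the `i`-th block of `x` by `z`. -/
noncomputable def blockUpdate {N K : ℕ} (x : XVec N K) (i : Fin K) (z : Blk N) : XVec N K :=
  WithLp.toLp 2 (Function.update x i z)

open Set Filter
open scoped Topology

section Calculus

variable {E : Type*} [NormedAddCommGroup E] [InnerProductSpace ℝ E] [CompleteSpace E]

theorem HasGradientAt.hasDerivAt_add_smul {F : E → ℝ} {g a d : E} {t : ℝ}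
    (hF : HasGradientAt F g (a + t • d)) :
    HasDerivAt (fun s : ℝ => F (a + s • d)) ⟪g, d⟫ t := by
  have hline : HasDerivAt (fun s : ℝ => a + s • d) d t := by
    simpa using ((hasDerivAt_id t).smul_const d).const_add a
  simpa [InnerProductSpace.toDual_apply_apply, Function.comp_def] using
    hF.hasFDerivAt.comp_hasDerivAt t hline

theorem le_add_of_hasDerivAt_le_add_mul {φ φ' : ℝ → ℝ} {c L : ℝ}
    (hφ : ∀ t ∈ Icc (0 : ℝ) 1, HasDerivAt φ (φ' t) t)
    (hle : ∀ t ∈ Icc (0 : ℝ) 1, φ' t ≤ c + L * t) :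
    φ 1 ≤ φ 0 + c + L / 2 := by
  have hB (t : ℝ) : HasDerivAt (fun t => φ 0 + c * t + L / 2 * t ^ 2) (c + L * t) t :=
    ((((hasDerivAt_id' t).const_mul c).const_add (φ 0)).add
      ((hasDerivAt_pow 2 t).const_mul (L / 2))).congr_deriv (by simp only [Nat.cast_ofNat]; ring)
  have := image_le_of_deriv_right_le_deriv_boundary (a := 0) (b := 1) (f' := φ')
    (fun t ht => (hφ t ht).continuousAt.continuousWithinAt)
    (fun t ht => (hφ t (Ico_subset_Icc_self ht)).hasDerivWithinAt)
    (B' := fun t => c + L * t) (by simp)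
    (fun t _ => (hB t).continuousAt.continuousWithinAt)
    (fun t _ => (hB t).hasDerivWithinAt)
    (fun t ht => hle t (Ico_subset_Icc_self ht)) (right_mem_Icc.2 zero_le_one)
  simpa using this

theorem le_add_inner_add_of_inner_gradient_sub_le {F : E → ℝ} {G : E → E} {a d : E} {L : ℝ}
    (hF : ∀ t ∈ Icc (0 : ℝ) 1, HasGradientAt F (G (a + t • d)) (a + t • d))
    (hG : ∀ t ∈ Icc (0 : ℝ) 1, ⟪G (a + t • d) - G a, d⟫ ≤ L * ‖d‖ ^ 2 * t) :
    F (a + d) ≤ F a + ⟪G a, d⟫ + L / 2 * ‖d‖ ^ 2 := by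
  have := le_add_of_hasDerivAt_le_add_mul (φ := fun t => F (a + t • d)) (c := ⟪G a, d⟫)
    (L := L * ‖d‖ ^ 2)
    (fun t ht => (hF t ht).hasDerivAt_add_smul)
    (fun t ht => by have := hG t ht; rw [inner_sub_left] at this; linarith)
  simpa [mul_div_right_comm] using this


theorem sub_le_sub_add_mul_of_norm_gradient_sub_le {α F : Type*} [NormedAddCommGroup F]
    [InnerProductSpace ℝ F] [CompleteSpace F] {f : α → F → ℝ} {G : α → F → F}
    (hf : ∀ x y, HasGradientAt (fun z => f x z) (G x y) y) {Y : Set F} (hY : Convex ℝ Y)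
    {x x' : α} {y y' : F} (hy : y ∈ Y) (hy' : y' ∈ Y) {c : ℝ}
    (hG : ∀ v ∈ Y, ‖G x' v - G x v‖ ≤ c) :
    f x' y' - f x y' ≤ f x' y - f x y + c * ‖y' - y‖ := by
  have := le_add_of_hasDerivAt_le_add_mul (L := 0) (c := c * ‖y' - y‖)
    (φ := fun t => f x' (y + t • (y' - y)) - f x (y + t • (y' - y)))
    (fun t _ => (hf x' _).hasDerivAt_add_smul.sub (hf x _).hasDerivAt_add_smul)
    (fun t ht => by
      rw [zero_mul, add_zero, ← inner_sub_left]
      exact (real_inner_le_norm _ _).trans (mul_le_mul_of_nonneg_right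
        (hG _ (hY.add_smul_sub_mem hy hy' ht)) (norm_nonneg _)))
  simp only [one_smul, zero_smul, add_zero, add_sub_cancel, zero_div] at this
  linarith

end Calculus

section StrongConvexity

variable {E : Type*} [NormedAddCommGroup E] [InnerProductSpace ℝ E]
  {s : Set E} {f : E → ℝ} {m : ℝ}

theorem StrongConvexOn.add {g : E → ℝ} {n : ℝ} (hf : StrongConvexOn s m f)
    (hg : StrongConvexOn s n g) :
    StrongConvexOn s (m + n) (f + g) :=
  (UniformConvexOn.add hf hg).mono fun r => by simp only [Pi.add_apply]; linarith

theorem strongConvexOn_of_inner_add_le_sub {G : E → E} (hs : Convex ℝ s)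
    (h : ∀ x ∈ s, ∀ y ∈ s, ⟪G y, x - y⟫ + m / 2 * ‖x - y‖ ^ 2 ≤ f x - f y) :
    StrongConvexOn s m f := by
  refine ⟨hs, fun x hx y hy a b ha hb hab => ?_⟩
  obtain rfl : b = 1 - a := by linarith
  set p := a • x + (1 - a) • y
  have hp : p ∈ s := hs hx hy ha hb hab
  have hxp : x - p = (1 - a) • (x - y) := by
    simp only [p]; module
  have hyp : y - p = -a • (x - y) := by
    simp only [p]; module
  have h₁ := h x hx p hp
  have h₂ := h y hy p hp
  rw [hxp, inner_smul_right, norm_smul, mul_pow, Real.norm_eq_abs, sq_abs] at h₁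
  rw [hyp, inner_smul_right, norm_smul, mul_pow, Real.norm_eq_abs, sq_abs] at h₂
  simp only [smul_eq_mul]
  nlinarith [mul_le_mul_of_nonneg_left h₁ ha, mul_le_mul_of_nonneg_left h₂ hb]

theorem concaveOn_of_sub_le_inner {G : E → E} (hs : Convex ℝ s)
    (h : ∀ x ∈ s, ∀ y ∈ s, f x - f y ≤ ⟪G y, x - y⟫) : ConcaveOn ℝ s f := by
  refine neg_convexOn_iff.1 (strongConvexOn_zero.1 ?_)
  refine strongConvexOn_of_inner_add_le_sub (G := -G) hs fun x hx y hy => ?_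
  simp only [Pi.neg_apply, inner_neg_left]
  linarith [h x hx y hy]

theorem strongConvexOn_mul_norm_sub_sq (hs : Convex ℝ s) (c : ℝ) (a : E) :
    StrongConvexOn s c (fun x => c / 2 * ‖x - a‖ ^ 2) := by
  refine strongConvexOn_of_inner_add_le_sub (G := fun y => c • (y - a)) hs fun x _ y _ => ?_
  have : x - a = (y - a) + (x - y) := by abel
  rw [this, norm_add_sq_real, real_inner_smul_left]
  exact le_of_eq (by ring)

theorem StrongConvexOn.add_sq_le_of_isMinOn {x z : E} (hf : StrongConvexOn s m f)
    (hx : x ∈ s) (hmin : IsMinOn f s x) (hz : z ∈ s) :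
    f x + m / 2 * ‖z - x‖ ^ 2 ≤ f z := by
  have key : ∀ t ∈ Ioo (0 : ℝ) 1, f x + (1 - t) * (m / 2 * ‖z - x‖ ^ 2) ≤ f z := by
    rintro t ⟨ht₀, ht₁⟩
    have hconv := hf.2 hx hz (sub_nonneg.2 ht₁.le) ht₀.le (by ring)
    have hle : f x ≤ f ((1 - t) • x + t • z) := hmin (hf.1 hx hz (by linarith) ht₀.le (by ring))
    rw [norm_sub_rev] at hconv
    simp only [smul_eq_mul] at hconv
    nlinarith
  have hlim : Tendsto (fun t : ℝ => f x + (1 - t) * (m / 2 * ‖z - x‖ ^ 2)) (𝓝[>] 0)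
      (𝓝 (f x + (1 - 0) * (m / 2 * ‖z - x‖ ^ 2))) :=
    (Continuous.tendsto (by fun_prop) 0).mono_left nhdsWithin_le_nhds
  rw [sub_zero, one_mul] at hlim
  refine le_of_tendsto hlim ?_
  filter_upwards [Ioo_mem_nhdsGT one_pos] with t ht using key t ht

theorem StrongConvexOn.add_sq_le_of_prox {a x z : E} {c : ℝ} (hf : StrongConvexOn s m f)
    (hx : x ∈ s) (hmin : ∀ y ∈ s, f x + c / 2 * ‖x - a‖ ^ 2 ≤ f y + c / 2 * ‖y - a‖ ^ 2)
    (hz : z ∈ s) :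
    f x + c / 2 * ‖x - a‖ ^ 2 + (m + c) / 2 * ‖z - x‖ ^ 2 ≤ f z + c / 2 * ‖z - a‖ ^ 2 :=
  (hf.add (strongConvexOn_mul_norm_sub_sq hf.1 c a)).add_sq_le_of_isMinOn hx hmin hz

theorem surrogate_prox_step_decrease {C : Set E} {F U h : E → ℝ} {GU : E → E} {a z : E}
    {μ L β : ℝ} (hU : ∀ v ∈ C, ∀ v' ∈ C, ⟪GU v', v - v'⟫ + μ / 2 * ‖v - v'‖ ^ 2 ≤ U v - U v')
    (hh : ConvexOn ℝ C h)
    (hF : ∀ v ∈ C, F v ≤ F a + ⟪GU a, v - a⟫ + L / 2 * ‖v - a‖ ^ 2) (ha : a ∈ C) (hz : z ∈ C)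
    (hmin : ∀ v ∈ C, U z + h z + β / 2 * ‖z - a‖ ^ 2 ≤ U v + h v + β / 2 * ‖v - a‖ ^ 2) :
    F z + h z + (β + μ - L / 2) * ‖z - a‖ ^ 2 ≤ F a + h a := by
  have hgrowth := ((strongConvexOn_of_inner_add_le_sub hh.1 hU).add
    (strongConvexOn_zero.2 hh)).add_sq_le_of_prox hz hmin ha
  simp only [Pi.add_apply, sub_self, norm_zero, norm_sub_rev a z] at hgrowth
  linarith [hU z hz a ha, hF z hz]

theorem prox_ascent_growth {Y : Set E} {φ g : E → ℝ} (hφ : ConcaveOn ℝ Y φ)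
    (hg : ConvexOn ℝ Y g) {γ ρ : ℝ} {y y' u : E} (hy' : y' ∈ Y)
    (hmax : ∀ u ∈ Y, φ u - g u - 1 / (2 * ρ) * ‖u - y‖ ^ 2 - γ / 2 * ‖u‖ ^ 2
      ≤ φ y' - g y' - 1 / (2 * ρ) * ‖y' - y‖ ^ 2 - γ / 2 * ‖y'‖ ^ 2) (hu : u ∈ Y) :
    φ u - g u - γ / 2 * ‖u‖ ^ 2 - 1 / (2 * ρ) * ‖u - y‖ ^ 2 + (γ + 1 / ρ) / 2 * ‖u - y'‖ ^ 2
      ≤ φ y' - g y' - γ / 2 * ‖y'‖ ^ 2 - 1 / (2 * ρ) * ‖y' - y‖ ^ 2 := by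
  have hF := ((strongConvexOn_zero.2 hg).add (strongConvexOn_zero.2 hφ.neg)).add
    (strongConvexOn_mul_norm_sub_sq hg.1 γ 0)
  have hc : 1 / ρ / 2 = 1 / (2 * ρ) := by ring
  have := hF.add_sq_le_of_prox (c := 1 / ρ) (a := y) hy' (fun v hv => by
    simp only [Pi.add_apply, Pi.neg_apply, sub_zero, hc]; linarith [hmax v hv]) hu
  simp only [Pi.add_apply, Pi.neg_apply, sub_zero, hc, zero_add] at this
  linarith

end StrongConvexity

theorem add_sum_le_of_succ_le {n : ℕ} {a : ℕ → ℝ} {c : Fin n → ℝ}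
    (h : ∀ i : Fin n, a (i + 1) + c i ≤ a i) : a n + ∑ i, c i ≤ a 0 := by
  induction n with
  | zero => simp
  | succ n ih =>
    have hinit := ih (c := fun i => c i.castSucc) fun i => h i.castSucc
    have hlast := h (Fin.last n)
    rw [Fin.val_last] at hlast
    rw [Fin.sum_univ_castSucc]
    linarith

theorem PiLp.inner_single_right {ι : Type*} [Fintype ι] [DecidableEq ι] {β : ι → Type*}
    [∀ i, NormedAddCommGroup (β i)] [∀ i, InnerProductSpace ℝ (β i)] (u : PiLp 2 β) (i : ι)
    (v : β i) : ⟪u, PiLp.single 2 i v⟫ = ⟪u i, v⟫ := by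
  rw [PiLp.inner_apply, Fintype.sum_eq_single i fun j hj => by simp [hj], PiLp.single_eq_same]

section Blocks

variable {N K : ℕ}

@[simp]
theorem blockUpdate_apply (x : XVec N K) (i : Fin K) (z : Blk N) (j : Fin K) :
    blockUpdate x i z j = Function.update x.ofLp i z j := rfl

@[simp]
theorem blockUpdate_self (x : XVec N K) (i : Fin K) : blockUpdate x i (x i) = x := by
  ext j : 1; simp

theorem blockUpdate_eq_add_single (x : XVec N K) (i : Fin K) (z : Blk N) :
    blockUpdate x i z = x + PiLp.single 2 i (z - x i) := by
  ext j : 1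
  by_cases hj : j = i
  · subst hj; simp
  · simp [hj]

theorem blockUpdate_mem {Xi : Fin K → Set (Blk N)} {x : XVec N K} (hx : ∀ j, x j ∈ Xi j)
    {i : Fin K} {z : Blk N} (hz : z ∈ Xi i) (j : Fin K) : blockUpdate x i z j ∈ Xi j := by
  by_cases hj : j = i
  · subst hj; simpa using hz
  · simpa [hj] using hx j

theorem sum_blockUpdate (h : Fin K → Blk N → ℝ) (x : XVec N K) (i : Fin K) (z : Blk N) :
    ∑ j, h j (blockUpdate x i z j) + h i (x i) = ∑ j, h j (x j) + h i z := by
  simp only [blockUpdate_apply]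
  rw [← Finset.add_sum_erase _ _ (Finset.mem_univ i),
    ← Finset.add_sum_erase _ _ (Finset.mem_univ i)]
  rw [Finset.sum_congr rfl fun j hj => by rw [Function.update_of_ne (Finset.ne_of_mem_erase hj)],
    Function.update_self]
  ring

theorem blockUpdate_descent {F : XVec N K → ℝ} {G : XVec N K → XVec N K}
    (hF : ∀ x, HasGradientAt F (G x) x) {Xi : Fin K → Set (Blk N)} {i : Fin K} {L : ℝ}
    (hL : ∀ x x' : XVec N K, (∀ j, x j ∈ Xi j) → (∀ j, x' j ∈ Xi j) →
      ‖G x' i - G x i‖ ≤ L * ‖x' - x‖)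
    (hXi : Convex ℝ (Xi i)) {w : XVec N K} (hw : ∀ j, w j ∈ Xi j) {z : Blk N} (hz : z ∈ Xi i) :
    F (blockUpdate w i z) ≤ F w + ⟪G w i, z - w i⟫ + L / 2 * ‖z - w i‖ ^ 2 := by
  set d : XVec N K := PiLp.single 2 i (z - w i)
  have hd : ‖d‖ = ‖z - w i‖ := PiLp.norm_single _ _ _ _
  rw [blockUpdate_eq_add_single, ← PiLp.inner_single_right, ← hd]
  refine le_add_inner_add_of_inner_gradient_sub_le (fun t _ => hF _) fun t ht => ?_
  have hseg : w + t • d = blockUpdate w i (w i + t • (z - w i)) := by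
    ext j : 1
    by_cases hj : j = i
    · subst hj; simp [d]
    · simp [d, hj]
  have hmem : ∀ j, (w + t • d) j ∈ Xi j :=
    hseg ▸ blockUpdate_mem hw (hXi.add_smul_sub_mem (hw i) hz ht)
  calc ⟪G (w + t • d) - G w, d⟫ = ⟪G (w + t • d) i - G w i, z - w i⟫ :=
        PiLp.inner_single_right _ _ _
    _ ≤ ‖G (w + t • d) i - G w i‖ * ‖z - w i‖ := real_inner_le_norm _ _
    _ ≤ L * ‖t • d‖ * ‖z - w i‖ := by
        gcongr; simpa using hL _ _ hw hmem
    _ = L * ‖d‖ ^ 2 * t := by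
        rw [norm_smul, Real.norm_of_nonneg ht.1, hd]; ring

def blockMix (x x' : XVec N K) (k : ℕ) : XVec N K :=
  WithLp.toLp 2 fun j => if (j : ℕ) < k then x' j else x j

theorem hibsaW_eq_blockMix (xs : ℕ → XVec N K) (r : ℕ) (i : Fin K) :
    hibsaW xs r i = blockMix (xs r) (xs (r + 1)) i := rfl

@[simp] theorem blockMix_zero (x x' : XVec N K) : blockMix x x' 0 = x := by
  ext j : 1; simp [blockMix]

theorem blockMix_card (x x' : XVec N K) : blockMix x x' K = x' := by
  ext j : 1; simp [blockMix]

@[simp] theorem blockMix_apply_self (x x' : XVec N K) (i : Fin K) : blockMix x x' i i = x i := by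
  simp [blockMix]

theorem blockMix_mem {Xi : Fin K → Set (Blk N)} {x x' : XVec N K} (hx : ∀ j, x j ∈ Xi j)
    (hx' : ∀ j, x' j ∈ Xi j) (k : ℕ) (j : Fin K) : blockMix x x' k j ∈ Xi j := by
  simp only [blockMix, PiLp.toLp_apply]; split_ifs <;> simp [hx, hx']

theorem blockUpdate_blockMix (x x' : XVec N K) (i : Fin K) :
    blockUpdate (blockMix x x' i) i (x' i) = blockMix x x' (i + 1) := by
  ext j : 1
  by_cases hj : j = i
  · subst hj; simp [blockMix]
  · have : (j : ℕ) ≠ i := Fin.val_ne_of_ne hj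
    simp only [blockUpdate_apply, Function.update_of_ne hj, blockMix, PiLp.toLp_apply]
    split_ifs <;> first | rfl | omega

end Blocks

section HiBSA

variable {N K M : ℕ} {f : XVec N K → YVec M → ℝ} {Xi : Fin K → Set (Blk N)} {Y : Set (YVec M)}
  {h : Fin K → Blk N → ℝ} {Gfx : XVec N K → YVec M → XVec N K} {Lx : Fin K → ℝ}
  {U : Fin K → Blk N → XVec N K → YVec M → ℝ} {GU : Fin K → Blk N → XVec N K → YVec M → Blk N}
  {μ : Fin K → ℝ}

theorem hibsa_block_update_decrease (hXiconv : ∀ i, Convex ℝ (Xi i))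
    (hhconv : ∀ i, ConvexOn ℝ Set.univ (h i))
    (hGfx : ∀ x y, HasGradientAt (fun z => f z y) (Gfx x y) x)
    (hLx : ∀ (i : Fin K) (y : YVec M), y ∈ Y → ∀ x x' : XVec N K,
      (∀ j, x j ∈ Xi j) → (∀ j, x' j ∈ Xi j) →
      ‖Gfx x' y i - Gfx x y i‖ ≤ Lx i * ‖x' - x‖)
    (hB1 : ∀ (i : Fin K) (w : XVec N K) (y : YVec M), y ∈ Y →
      ∀ z z' : Blk N, z ∈ Xi i → z' ∈ Xi i →
      ⟪GU i z' w y, z - z'⟫ + μ i / 2 * ‖z - z'‖ ^ 2 ≤ U i z w y - U i z' w y)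
    (hB2 : ∀ (i : Fin K) (x : XVec N K) (y : YVec M),
      (∀ j, x j ∈ Xi j) → y ∈ Y → GU i (x i) x y = Gfx x y i)
    {w : XVec N K} {y : YVec M} (hw : ∀ j, w j ∈ Xi j) (hy : y ∈ Y) {i : Fin K} {β : ℝ}
    {z : Blk N} (hz : z ∈ Xi i)
    (hmin : ∀ v ∈ Xi i, U i z w y + h i z + β / 2 * ‖z - w i‖ ^ 2
      ≤ U i v w y + h i v + β / 2 * ‖v - w i‖ ^ 2) :
    f (blockUpdate w i z) y + h i z + (β + μ i - Lx i / 2) * ‖z - w i‖ ^ 2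
      ≤ f w y + h i (w i) := by
  have := surrogate_prox_step_decrease (F := fun v => f (blockUpdate w i v) y)
    (fun v hv v' hv' => hB1 i w y hy v v' hv hv')
    ((hhconv i).subset (subset_univ _) (hXiconv i))
    (fun v hv => by
      simpa [hB2 i w y hw hy] using blockUpdate_descent (fun x => hGfx x y) (hLx i y hy)
        (hXiconv i) hw hv)
    (hw i) hz hmin
  simpa only [blockUpdate_self] using this

theorem hibsa_x_sweep_decrease (hXiconv : ∀ i, Convex ℝ (Xi i))
    (hhconv : ∀ i, ConvexOn ℝ Set.univ (h i))
    (hGfx : ∀ x y, HasGradientAt (fun z => f z y) (Gfx x y) x)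
    (hLx : ∀ (i : Fin K) (y : YVec M), y ∈ Y → ∀ x x' : XVec N K,
      (∀ j, x j ∈ Xi j) → (∀ j, x' j ∈ Xi j) →
      ‖Gfx x' y i - Gfx x y i‖ ≤ Lx i * ‖x' - x‖)
    (hB1 : ∀ (i : Fin K) (w : XVec N K) (y : YVec M), y ∈ Y →
      ∀ z z' : Blk N, z ∈ Xi i → z' ∈ Xi i →
      ⟪GU i z' w y, z - z'⟫ + μ i / 2 * ‖z - z'‖ ^ 2 ≤ U i z w y - U i z' w y)
    (hB2 : ∀ (i : Fin K) (x : XVec N K) (y : YVec M),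
      (∀ j, x j ∈ Xi j) → y ∈ Y → GU i (x i) x y = Gfx x y i)
    {μmin β : ℝ} (hμ : ∀ i, μmin ≤ μ i) (hβ : ∀ i, Lx i ≤ β)
    {x x' : XVec N K} {y : YVec M} (hx : ∀ j, x j ∈ Xi j) (hx' : ∀ j, x' j ∈ Xi j) (hy : y ∈ Y)
    (hmin : ∀ i, ∀ v ∈ Xi i, U i (x' i) (blockMix x x' i) y + h i (x' i)
        + β / 2 * ‖x' i - x i‖ ^ 2
      ≤ U i v (blockMix x x' i) y + h i v + β / 2 * ‖v - x i‖ ^ 2) :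
    f x' y + ∑ i, h i (x' i) + (β / 2 + μmin) * ‖x' - x‖ ^ 2 ≤ f x y + ∑ i, h i (x i) := by
  have step (i : Fin K) :
      f (blockMix x x' (i + 1)) y + ∑ j, h j (blockMix x x' (i + 1) j)
          + (β / 2 + μmin) * ‖x' i - x i‖ ^ 2
        ≤ f (blockMix x x' i) y + ∑ j, h j (blockMix x x' i j) := by
    have hstep := hibsa_block_update_decrease hXiconv hhconv hGfx hLx hB1 hB2 (blockMix_mem hx hx' i) hy
      (hx' i) (by simpa using hmin i)
    have hsum := sum_blockUpdate h (blockMix x x' i) i (x' i)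
    have hcoef : (β / 2 + μmin) * ‖x' i - x i‖ ^ 2 ≤ (β + μ i - Lx i / 2) * ‖x' i - x i‖ ^ 2 :=
      mul_le_mul_of_nonneg_right (by linarith [hμ i, hβ i]) (sq_nonneg _)
    rw [blockUpdate_blockMix, blockMix_apply_self] at hstep hsum
    linarith
  have := add_sum_le_of_succ_le
    (a := fun k => f (blockMix x x' k) y + ∑ j, h j (blockMix x x' k j)) step
  rw [← Finset.mul_sum] at this
  simpa [blockMix_card, PiLp.norm_sq_eq_of_L2] using this

end HiBSA

theorem potential_step_of_estimates {ρ β μ L p q s n₀ n₁ γ₀ γ₁ γ₂ γ₃ ℓ₀ ℓ₁ : ℝ}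
    (hρ : 0 < ρ) (hγ₂ : 0 < γ₂) (hγ₂₁ : γ₂ ≤ γ₁) (hγ₃ : 1 / γ₃ - 1 / γ₂ ≤ ρ / 5)
    (hℓ : ℓ₁ - ℓ₀ ≤ -(β / 2 + μ) * p ^ 2 + L * p * q + γ₁ / 2 * (n₁ - n₀) + q * s / ρ
      - γ₁ / 2 * q ^ 2)
    (hq : (γ₁ + γ₂) / 2 * q ^ 2 + q ^ 2 / ρ ≤ L * p * q + q * s / ρ + (γ₁ - γ₂) / 2 * (n₁ - n₀)) :
    ℓ₁ - γ₂ / 2 * n₁ - 2 / ρ * (γ₁ / γ₂ - 1) * n₁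
        + (1 / (2 * ρ) + 2 / (ρ ^ 2 * γ₂) + 2 / ρ ^ 2 * (1 / γ₃ - 1 / γ₂)) * q ^ 2
      ≤ (ℓ₀ - γ₁ / 2 * n₀ - 2 / ρ * (γ₀ / γ₁ - 1) * n₀
          + (1 / (2 * ρ) + 2 / (ρ ^ 2 * γ₁) + 2 / ρ ^ 2 * (1 / γ₂ - 1 / γ₁)) * s ^ 2)
        - (β / 2 + μ - (ρ * L ^ 2 / 2 + 2 * L ^ 2 / (ρ * γ₂ ^ 2))) * p ^ 2
        - 1 / (10 * ρ) * q ^ 2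
        + (γ₁ - γ₂) / 2 * n₁
        + 2 / ρ * (γ₀ / γ₁ - γ₁ / γ₂) * n₀ := by
  -- `hq` scaled by `4 / (ργ₂)`, after Young's inequality on its cross terms; `hcleared` is the
  -- same inequality with denominators cleared.
  have hcleared : ρ * γ₂ ^ 2 * q ^ 2 + γ₂ * (q ^ 2 - s ^ 2)
      ≤ ρ * L ^ 2 * p ^ 2 + ρ * γ₂ * (γ₁ - γ₂) * (n₁ - n₀) := by
    have := mul_le_mul_of_nonneg_left hq (by positivity : 0 ≤ 2 * ρ * γ₂)
    field_simp at this
    nlinarith [mul_nonneg hρ.le (sq_nonneg (L * p - γ₂ * q)), mul_nonneg hγ₂.le (sq_nonneg (q - s)),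
      mul_nonneg (by positivity : 0 ≤ ρ * γ₂ * q ^ 2) (sub_nonneg.2 hγ₂₁)]
  have hscaled : 2 / ρ * q ^ 2 + 2 / (ρ ^ 2 * γ₂) * (q ^ 2 - s ^ 2)
      ≤ 2 * L ^ 2 / (ρ * γ₂ ^ 2) * p ^ 2 + 2 / ρ * (γ₁ / γ₂ - 1) * (n₁ - n₀) := by
    have key : 2 * L ^ 2 / (ρ * γ₂ ^ 2) * p ^ 2 + 2 / ρ * (γ₁ / γ₂ - 1) * (n₁ - n₀)
        - (2 / ρ * q ^ 2 + 2 / (ρ ^ 2 * γ₂) * (q ^ 2 - s ^ 2))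
        = 2 / (ρ ^ 2 * γ₂ ^ 2) * (ρ * L ^ 2 * p ^ 2 + ρ * γ₂ * (γ₁ - γ₂) * (n₁ - n₀)
          - (ρ * γ₂ ^ 2 * q ^ 2 + γ₂ * (q ^ 2 - s ^ 2))) := by
      field_simp
    have : 0 ≤ 2 / (ρ ^ 2 * γ₂ ^ 2) * (ρ * L ^ 2 * p ^ 2 + ρ * γ₂ * (γ₁ - γ₂) * (n₁ - n₀)
          - (ρ * γ₂ ^ 2 * q ^ 2 + γ₂ * (q ^ 2 - s ^ 2))) :=
      mul_nonneg (by positivity) (sub_nonneg.2 hcleared)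
    linarith
  have hyoung₁ : L * p * q ≤ ρ * L ^ 2 / 2 * p ^ 2 + q ^ 2 / (2 * ρ) := by
    have key : ρ * L ^ 2 / 2 * p ^ 2 + q ^ 2 / (2 * ρ) - L * p * q
        = (ρ * L * p - q) ^ 2 / (2 * ρ) := by
      field_simp; ring
    have : 0 ≤ (ρ * L * p - q) ^ 2 / (2 * ρ) := by positivity
    linarith
  have hyoung₂ : q * s / ρ ≤ q ^ 2 / (2 * ρ) + s ^ 2 / (2 * ρ) := by
    have key : q ^ 2 / (2 * ρ) + s ^ 2 / (2 * ρ) - q * s / ρ = (q - s) ^ 2 / (2 * ρ) := by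
      field_simp; ring
    have : 0 ≤ (q - s) ^ 2 / (2 * ρ) := by positivity
    linarith
  have hstep : 2 / ρ ^ 2 * (1 / γ₃ - 1 / γ₂) * q ^ 2 ≤ 2 / (5 * ρ) * q ^ 2 := by
    have h := mul_le_mul_of_nonneg_left hγ₃ (by positivity : 0 ≤ 2 / ρ ^ 2 * q ^ 2)
    have e : 2 / ρ ^ 2 * q ^ 2 * (ρ / 5) = 2 / (5 * ρ) * q ^ 2 := by field_simp
    linarith
  have hslack : 0 ≤ γ₁ / 2 * q ^ 2 := by have := hγ₂.trans_le hγ₂₁; positivity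
  ring_nf at hℓ hscaled hyoung₁ hyoung₂ hstep hslack ⊢
  linarith

theorem hibsa_potential_decrease_concave_general
    {N K M : ℕ}
    -- Assumption A
    (f : XVec N K → YVec M → ℝ)
    (Xi : Fin K → Set (Blk N)) (hXiconv : ∀ i, Convex ℝ (Xi i))
    (Y : Set (YVec M)) (hYconv : Convex ℝ Y)
    (h : Fin K → Blk N → ℝ) (hhconv : ∀ i, ConvexOn ℝ Set.univ (h i))
    (g : YVec M → ℝ) (hgconv : ConvexOn ℝ Set.univ g)
    (Gfx : XVec N K → YVec M → XVec N K)
    (hGfx : ∀ x y, HasGradientAt (fun z => f z y) (Gfx x y) x)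
    (Gfy : XVec N K → YVec M → YVec M)
    (hGfy : ∀ x y, HasGradientAt (fun z => f x z) (Gfy x y) y)
    (Lx : Fin K → ℝ)
    (hLx : ∀ (i : Fin K) (y : YVec M), y ∈ Y → ∀ x x' : XVec N K,
      (∀ j, x j ∈ Xi j) → (∀ j, x' j ∈ Xi j) →
      ‖Gfx x' y i - Gfx x y i‖ ≤ Lx i * ‖x' - x‖)
    (Ly : ℝ)
    (hLy : ∀ (x x' : XVec N K) (y y' : YVec M),
      (∀ j, x j ∈ Xi j) → (∀ j, x' j ∈ Xi j) → y ∈ Y → y' ∈ Y →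
      ‖Gfy x' y' - Gfy x y‖ ≤ Ly * Real.sqrt (‖x' - x‖ ^ 2 + ‖y' - y‖ ^ 2))
    -- Assumption B
    (U : Fin K → Blk N → XVec N K → YVec M → ℝ)
    (GU : Fin K → Blk N → XVec N K → YVec M → Blk N)
    (μ : Fin K → ℝ)
    (μmin : ℝ) (hμmin : μmin = ⨅ i, μ i)
    (hB1 : ∀ (i : Fin K) (w : XVec N K) (y : YVec M), y ∈ Y →
      ∀ z z' : Blk N, z ∈ Xi i → z' ∈ Xi i →
      ⟪GU i z' w y, z - z'⟫ + μ i / 2 * ‖z - z'‖ ^ 2 ≤ U i z w y - U i z' w y)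
    (hB2 : ∀ (i : Fin K) (x : XVec N K) (y : YVec M),
      (∀ j, x j ∈ Xi j) → y ∈ Y → GU i (x i) x y = Gfx x y i)
    -- Assumption C-2 (concavity in y)
    (hC2 : ∀ (x : XVec N K) (y z : YVec M), (∀ j, x j ∈ Xi j) → z ∈ Y → y ∈ Y →
      f x y - f x z ≤ ⟪Gfy x z, y - z⟫)
    -- HiBSA iterates (concave case: exact regularized y-update)
    (ρ : ℝ) (hρ : 0 < ρ)
    (βs γ : ℕ → ℝ) (hγpos : ∀ r, 0 < γ r) (hβLx : ∀ (r : ℕ) (i : Fin K), Lx i < βs r)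
    (xs : ℕ → XVec N K) (ys : ℕ → YVec M)
    (hxup : ∀ (r : ℕ) (i : Fin K),
      xs (r + 1) i ∈ Xi i ∧
      ∀ z ∈ Xi i,
        U i (xs (r + 1) i) (hibsaW xs r i) (ys r) + h i (xs (r + 1) i)
            + βs r / 2 * ‖xs (r + 1) i - xs r i‖ ^ 2
          ≤ U i z (hibsaW xs r i) (ys r) + h i z + βs r / 2 * ‖z - xs r i‖ ^ 2)
    (hyup : ∀ r : ℕ,
      ys (r + 1) ∈ Y ∧
      ∀ u ∈ Y,
        f (xs (r + 1)) u - g u - 1 / (2 * ρ) * ‖u - ys r‖ ^ 2 - γ r / 2 * ‖u‖ ^ 2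
          ≤ f (xs (r + 1)) (ys (r + 1)) - g (ys (r + 1))
              - 1 / (2 * ρ) * ‖ys (r + 1) - ys r‖ ^ 2 - γ r / 2 * ‖ys (r + 1)‖ ^ 2) 
    -- parameter conditions (Assumption C-3 type conditions)
    (hγmono : ∀ r : ℕ, γ (r + 1) ≤ γ r)
    (hγstep : ∀ r : ℕ, 1 / γ (r + 1) - 1 / γ r ≤ ρ / 5) :
    -- conclusion: decrease of the potential function
    ∀ r : ℕ, 2 ≤ r →
      ((f (xs (r + 1)) (ys (r + 1)) + ∑ i, h i (xs (r + 1) i) - g (ys (r + 1)))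
          - γ r / 2 * ‖ys (r + 1)‖ ^ 2
          - 2 / ρ * (γ (r - 1) / γ r - 1) * ‖ys (r + 1)‖ ^ 2
          + (1 / (2 * ρ) + 2 / (ρ ^ 2 * γ r) + 2 / ρ ^ 2 * (1 / γ (r + 1) - 1 / γ r))
              * ‖ys (r + 1) - ys r‖ ^ 2)
        ≤ ((f (xs r) (ys r) + ∑ i, h i (xs r i) - g (ys r))
              - γ (r - 1) / 2 * ‖ys r‖ ^ 2
              - 2 / ρ * (γ (r - 2) / γ (r - 1) - 1) * ‖ys r‖ ^ 2
              + (1 / (2 * ρ) + 2 / (ρ ^ 2 * γ (r - 1)) + 2 / ρ ^ 2 * (1 / γ r - 1 / γ (r - 1)))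
                  * ‖ys r - ys (r - 1)‖ ^ 2)
            - (βs r / 2 + μmin - (ρ * Ly ^ 2 / 2 + 2 * Ly ^ 2 / (ρ * (γ r) ^ 2)))
                * ‖xs (r + 1) - xs r‖ ^ 2
            - 1 / (10 * ρ) * ‖ys (r + 1) - ys r‖ ^ 2
            + (γ (r - 1) - γ r) / 2 * ‖ys (r + 1)‖ ^ 2
            + 2 / ρ * (γ (r - 2) / γ (r - 1) - γ (r - 1) / γ r) * ‖ys r‖ ^ 2 := by
  intro r hr
  obtain ⟨k, rfl⟩ : ∃ k, r = k + 1 := ⟨r - 1, by omega⟩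
  rw [Nat.add_sub_cancel]
  have hx m : ∀ j, xs (m + 1) j ∈ Xi j := fun j => (hxup m j).1
  have hy m : ys (m + 1) ∈ Y := (hyup m).1
  have hconc m : ConcaveOn ℝ Y (f (xs (m + 1))) :=
    concaveOn_of_sub_le_inner hYconv fun u hu v hv => hC2 _ u v (hx m) hv hu
  have hg : ConvexOn ℝ Y g := hgconv.subset (subset_univ Y) hYconv
  have hA := hibsa_x_sweep_decrease hXiconv hhconv hGfx hLx hB1 hB2
    (fun i => hμmin ▸ ciInf_le (Finite.bddBelow_range μ) i) (fun i => (hβLx _ i).le)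
    (hx k) (hx (k + 1)) (hy k) fun i => hibsaW_eq_blockMix xs _ i ▸ (hxup (k + 1) i).2
  have hB := prox_ascent_growth (hconc (k + 1)) hg (hy (k + 1)) (hyup (k + 1)).2 (hy k)
  have hC := prox_ascent_growth (hconc k) hg (hy k) (hyup k).2 (hy (k + 1))
  have hD := sub_le_sub_add_mul_of_norm_gradient_sub_le hGfy hYconv (hy k) (hy (k + 1))
    fun v hv => by simpa using hLy _ _ v v (hx k) (hx (k + 1)) hv hv
  have hT : 1 / (2 * ρ) * ‖ys (k + 2) - ys k‖ ^ 2
      ≤ 1 / (2 * ρ) * (‖ys (k + 2) - ys (k + 1)‖ + ‖ys (k + 1) - ys k‖) ^ 2 := by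
    gcongr; exact norm_sub_le_norm_sub_add_norm_sub _ _ _
  rw [sub_self, norm_zero, norm_sub_rev (ys (k + 1))] at hB
  refine potential_step_of_estimates hρ (hγpos _) (hγmono k) (hγstep _) ?_ ?_
  · ring_nf at hA hC hD hT ⊢
    linarith
  · ring_nf at hB hC hD hT ⊢
    linarith

/-- **Lemma 5 (potential decrease, concave case)** for HiBSA: under Assumptions A, B, C-2
and the parameter conditions `β^r > ρL_y² + 4L_y²/(ρ(γ^r)²) − 2μ`, `β^r > L_{xᵢ}`,
`γ^r` positive nonincreasing with `1/γ^{r+1} − 1/γ^r ≤ ρ/5`, the potential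
`P^{r+1} = ℓ(x^{r+1},y^{r+1}) − (γ^r/2)‖y^{r+1}‖² − (2/ρ)(γ^{r−1}/γ^r − 1)‖y^{r+1}‖²
 + (1/(2ρ) + 2/(ρ²γ^r) + (2/ρ²)(1/γ^{r+1} − 1/γ^r))‖y^{r+1} − y^r‖²`
satisfies the stated decrease estimate. -/
theorem hibsa_potential_decrease_concave
    {N K M : ℕ} [NeZero K]
    -- Assumption A
    (f : XVec N K → YVec M → ℝ)
    (Xi : Fin K → Set (Blk N)) (hXiconv : ∀ i, Convex ℝ (Xi i))
    (hXicomp : ∀ i, IsCompact (Xi i))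
    (Y : Set (YVec M)) (hYconv : Convex ℝ Y) (hYcomp : IsCompact Y)
    (h : Fin K → Blk N → ℝ) (hhconv : ∀ i, ConvexOn ℝ Set.univ (h i))
    (g : YVec M → ℝ) (hgconv : ConvexOn ℝ Set.univ g)
    (Gfx : XVec N K → YVec M → XVec N K)
    (hGfx : ∀ x y, HasGradientAt (fun z => f z y) (Gfx x y) x)
    (Gfy : XVec N K → YVec M → YVec M)
    (hGfy : ∀ x y, HasGradientAt (fun z => f x z) (Gfy x y) y)
    (Lx : Fin K → ℝ)
    (hLx : ∀ (i : Fin K) (y : YVec M), y ∈ Y → ∀ x x' : XVec N K,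
      (∀ j, x j ∈ Xi j) → (∀ j, x' j ∈ Xi j) →
      ‖Gfx x' y i - Gfx x y i‖ ≤ Lx i * ‖x' - x‖)
    (Ly : ℝ)
    (hLy : ∀ (x x' : XVec N K) (y y' : YVec M),
      (∀ j, x j ∈ Xi j) → (∀ j, x' j ∈ Xi j) → y ∈ Y → y' ∈ Y →
      ‖Gfy x' y' - Gfy x y‖ ≤ Ly * Real.sqrt (‖x' - x‖ ^ 2 + ‖y' - y‖ ^ 2))
    -- Assumption B
    (U : Fin K → Blk N → XVec N K → YVec M → ℝ)
    (GU : Fin K → Blk N → XVec N K → YVec M → Blk N)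
    (hGU : ∀ i z w y, HasGradientAt (fun u => U i u w y) (GU i z w y) z)
    (μ : Fin K → ℝ) (hμpos : ∀ i, 0 < μ i)
    (μmin : ℝ) (hμmin : μmin = ⨅ i, μ i)
    (hB1 : ∀ (i : Fin K) (w : XVec N K) (y : YVec M), y ∈ Y →
      ∀ z z' : Blk N, z ∈ Xi i → z' ∈ Xi i →
      ⟪GU i z' w y, z - z'⟫ + μ i / 2 * ‖z - z'‖ ^ 2 ≤ U i z w y - U i z' w y)
    (hB2 : ∀ (i : Fin K) (x : XVec N K) (y : YVec M),
      (∀ j, x j ∈ Xi j) → y ∈ Y → GU i (x i) x y = Gfx x y i)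
    (hB3 : ∀ (i : Fin K) (x : XVec N K) (y : YVec M),
      (∀ j, x j ∈ Xi j) → y ∈ Y →
      (∀ z ∈ Xi i, f (blockUpdate x i z) y ≤ U i z x y) ∧ U i (x i) x y = f x y)
    (Lu : Fin K → ℝ)
    (hB4 : ∀ (i : Fin K) (w : XVec N K) (y : YVec M) (z z' : Blk N),
      ‖GU i z w y - GU i z' w y‖ ≤ Lu i * ‖z - z'‖)
    -- Assumption C-2 (concavity in y)
    (hC2 : ∀ (x : XVec N K) (y z : YVec M), (∀ j, x j ∈ Xi j) → z ∈ Y → y ∈ Y →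
      f x y - f x z ≤ ⟪Gfy x z, y - z⟫)
    -- HiBSA iterates (concave case: exact regularized y-update)
    (ρ : ℝ) (hρ : 0 < ρ)
    (βs γ : ℕ → ℝ) (hγpos : ∀ r, 0 < γ r) (hβLx : ∀ (r : ℕ) (i : Fin K), Lx i < βs r)
    (xs : ℕ → XVec N K) (ys : ℕ → YVec M)
    (hx0 : ∀ j, xs 0 j ∈ Xi j) (hy0 : ys 0 ∈ Y)
    (hxup : ∀ (r : ℕ) (i : Fin K),
      xs (r + 1) i ∈ Xi i ∧
      ∀ z ∈ Xi i,
        U i (xs (r + 1) i) (hibsaW xs r i) (ys r) + h i (xs (r + 1) i)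
            + βs r / 2 * ‖xs (r + 1) i - xs r i‖ ^ 2
          ≤ U i z (hibsaW xs r i) (ys r) + h i z + βs r / 2 * ‖z - xs r i‖ ^ 2)
    (hyup : ∀ r : ℕ,
      ys (r + 1) ∈ Y ∧
      ∀ u ∈ Y,
        f (xs (r + 1)) u - g u - 1 / (2 * ρ) * ‖u - ys r‖ ^ 2 - γ r / 2 * ‖u‖ ^ 2
          ≤ f (xs (r + 1)) (ys (r + 1)) - g (ys (r + 1))
              - 1 / (2 * ρ) * ‖ys (r + 1) - ys r‖ ^ 2 - γ r / 2 * ‖ys (r + 1)‖ ^ 2) 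
    -- parameter conditions (Assumption C-3 type conditions)
    (hβbig : ∀ r : ℕ, ρ * Ly ^ 2 + 4 * Ly ^ 2 / (ρ * (γ r) ^ 2) - 2 * μmin < βs r)
    (hγmono : ∀ r : ℕ, γ (r + 1) ≤ γ r)
    (hγstep : ∀ r : ℕ, 1 / γ (r + 1) - 1 / γ r ≤ ρ / 5) :
    -- conclusion: decrease of the potential function
    ∀ r : ℕ, 2 ≤ r →
      ((f (xs (r + 1)) (ys (r + 1)) + ∑ i, h i (xs (r + 1) i) - g (ys (r + 1)))
          - γ r / 2 * ‖ys (r + 1)‖ ^ 2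
          - 2 / ρ * (γ (r - 1) / γ r - 1) * ‖ys (r + 1)‖ ^ 2
          + (1 / (2 * ρ) + 2 / (ρ ^ 2 * γ r) + 2 / ρ ^ 2 * (1 / γ (r + 1) - 1 / γ r))
              * ‖ys (r + 1) - ys r‖ ^ 2)
        ≤ ((f (xs r) (ys r) + ∑ i, h i (xs r i) - g (ys r))
              - γ (r - 1) / 2 * ‖ys r‖ ^ 2
              - 2 / ρ * (γ (r - 2) / γ (r - 1) - 1) * ‖ys r‖ ^ 2
              + (1 / (2 * ρ) + 2 / (ρ ^ 2 * γ (r - 1)) + 2 / ρ ^ 2 * (1 / γ r - 1 / γ (r - 1)))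
                  * ‖ys r - ys (r - 1)‖ ^ 2)
            - (βs r / 2 + μmin - (ρ * Ly ^ 2 / 2 + 2 * Ly ^ 2 / (ρ * (γ r) ^ 2)))
                * ‖xs (r + 1) - xs r‖ ^ 2
            - 1 / (10 * ρ) * ‖ys (r + 1) - ys r‖ ^ 2
            + (γ (r - 1) - γ r) / 2 * ‖ys (r + 1)‖ ^ 2
            + 2 / ρ * (γ (r - 2) / γ (r - 1) - γ (r - 1) / γ r) * ‖ys r‖ ^ 2 :=
  hibsa_potential_decrease_concave_general f Xi hXiconv Y hYconv h hhconv g hgconv Gfx hGfx Gfy hGfy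
    Lx hLx Ly hLy U GU μ μmin hμmin hB1 hB2 hC2 ρ hρ βs γ hγpos hβLx xs ys hxup hyup hγmono hγstep
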